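/- arXiv:1811.01177 — 7 statements merged into one kernel-verified Lean document; each statement's English description precedes it below -/
import Mathlib

section
/- Let P be an arbitrary subset of the Euclidean plane ℝ², let t > 0, and let w be a real number with 0 < w ≤ √2·t. If a finite set G ⊆ ℝ² guards P, then there exists a finite set G' contained in the grid wℤ² with |G'| ≤ |G| such that G' guards the Minkowski inflation P + closedBall(0, t). -/
open Pointwise

/-- A set of guards `G` guards a region `P` if every point of `P` is seen by some guard,
i.e. the closed segment from the guard to the point lies inside `P`. -/
def Guards (G P : Set (EuclideanSpace ℝ (Fin 2))) : Prop :=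
  ∀ p ∈ P, ∃ g ∈ G, segment ℝ g p ⊆ P

/-- The grid of width `w` in the Euclidean plane. -/
def grid (w : ℝ) : Set (EuclideanSpace ℝ (Fin 2)) :=
  {x | ∃ a b : ℤ, x 0 = w * a ∧ x 1 = w * b}

/-! Round every guard to a nearest grid point. Each coordinate moves by at most `w / 2`, so a guard
moves by at most `w / √2 ≤ t`. If `g` sees `p` in `P`, then for `‖u‖, ‖v‖ ≤ t` the moved guard
`g + u` sees `p + v` in `P + closedBall 0 t`: the segment from `g + u` to `p + v` lies in the
Minkowski sum of the segment `[g, p] ⊆ P` and the segment `[u, v]`, which stays in the convex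
ball. Rounding can only merge guards, so the number of guards does not grow. -/

open Metric Set

theorem segment_add_subset_add_segment {𝕜 E : Type*} [Semiring 𝕜] [PartialOrder 𝕜]
    [AddCommMonoid E] [Module 𝕜 E] (a b c d : E) :
    segment 𝕜 (a + c) (b + d) ⊆ segment 𝕜 a b + segment 𝕜 c d := by
  rintro _ ⟨s, t, hs, ht, hst, rfl⟩
  exact ⟨s • a + t • b, ⟨s, t, hs, ht, hst, rfl⟩, s • c + t • d, ⟨s, t, hs, ht, hst, rfl⟩,
    by simp only [smul_add]; abel⟩

theorem segment_add_subset_add_closedBall {E : Type*} [SeminormedAddCommGroup E]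
    [NormedSpace ℝ E] {P : Set E} {g p u v : E} {t : ℝ} (hgp : segment ℝ g p ⊆ P)
    (hu : ‖u‖ ≤ t) (hv : ‖v‖ ≤ t) :
    segment ℝ (g + u) (p + v) ⊆ P + closedBall 0 t :=
  (segment_add_subset_add_segment g p u v).trans <| add_subset_add hgp <|
    (convex_closedBall 0 t).segment_subset (mem_closedBall_zero_iff.2 hu)
      (mem_closedBall_zero_iff.2 hv)

theorem Guards.image_add_closedBall {G P : Set (EuclideanSpace ℝ (Fin 2))} {t : ℝ}
    (hG : Guards G P) (f : EuclideanSpace ℝ (Fin 2) → EuclideanSpace ℝ (Fin 2))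
    (hf : ∀ g, dist (f g) g ≤ t) : Guards (f '' G) (P + closedBall 0 t) := by
  rintro _ ⟨p, hp, v, hv, rfl⟩
  obtain ⟨g, hg, hgp⟩ := hG p hp
  refine ⟨f g, mem_image_of_mem f hg, ?_⟩
  have hu : ‖f g - g‖ ≤ t := dist_eq_norm (f g) g ▸ hf g
  simpa using segment_add_subset_add_closedBall hgp hu (mem_closedBall_zero_iff.1 hv)

theorem exists_int_abs_mul_sub_le {w : ℝ} (hw : 0 < w) (x : ℝ) :
    ∃ a : ℤ, |w * a - x| ≤ w / 2 := by
  refine ⟨round (x / w), ?_⟩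
  calc |w * round (x / w) - x| = w * |x / w - round (x / w)| := by
        rw [← abs_of_pos hw, ← abs_mul, abs_sub_comm, abs_of_pos hw, mul_sub,
          mul_div_cancel₀ x hw.ne']
    _ ≤ w * (1 / 2) := mul_le_mul_of_nonneg_left (abs_sub_round _) hw.le
    _ = w / 2 := by ring

theorem exists_mem_grid_dist_le {w : ℝ} (hw : 0 < w) (x : EuclideanSpace ℝ (Fin 2)) :
    ∃ y ∈ grid w, dist y x ≤ w / √2 := by
  obtain ⟨a, ha⟩ := exists_int_abs_mul_sub_le hw (x 0)
  obtain ⟨b, hb⟩ := exists_int_abs_mul_sub_le hw (x 1)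
  refine ⟨!₂[w * a, w * b], ⟨a, b, rfl, rfl⟩, ?_⟩
  rw [EuclideanSpace.dist_eq, Fin.sum_univ_two, Real.sqrt_le_iff, div_pow,
    Real.sq_sqrt zero_le_two]
  refine ⟨by positivity, ?_⟩
  simp only [Real.dist_eq]
  change |w * a - x 0| ^ 2 + |w * b - x 1| ^ 2 ≤ w ^ 2 / 2
  nlinarith [abs_nonneg (w * a - x 0), abs_nonneg (w * b - x 1)]

theorem minkowski_inflation_grid_guards_general
    (P : Set (EuclideanSpace ℝ (Fin 2))) (t w : ℝ)
    (hw0 : 0 < w) (hw : w ≤ Real.sqrt 2 * t)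
    (G : Set (EuclideanSpace ℝ (Fin 2))) (hGfin : G.Finite) (hG : Guards G P) :
    ∃ G' : Set (EuclideanSpace ℝ (Fin 2)), G'.Finite ∧ G' ⊆ grid w ∧
      Nat.card G' ≤ Nat.card G ∧
      Guards G' (P + Metric.closedBall (0 : EuclideanSpace ℝ (Fin 2)) t) := by
  choose f hf_grid hf_dist using exists_mem_grid_dist_le hw0
  have hf : ∀ g, dist (f g) g ≤ t := fun g =>
    (hf_dist g).trans ((div_le_iff₀' (by positivity)).2 hw)
  exact ⟨f '' G, hGfin.image f, image_subset_iff.2 fun g _ => hf_grid g,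
    Nat.card_image_le hGfin, hG.image_add_closedBall f hf⟩

theorem minkowski_inflation_grid_guards
    (P : Set (EuclideanSpace ℝ (Fin 2))) (t w : ℝ) (ht : 0 < t)
    (hw0 : 0 < w) (hw : w ≤ Real.sqrt 2 * t)
    (G : Set (EuclideanSpace ℝ (Fin 2))) (hGfin : G.Finite) (hG : Guards G P) :
    ∃ G' : Set (EuclideanSpace ℝ (Fin 2)), G'.Finite ∧ G' ⊆ grid w ∧
      Nat.card G' ≤ Nat.card G ∧
      Guards G' (P + Metric.closedBall (0 : EuclideanSpace ℝ (Fin 2)) t) :=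
  minkowski_inflation_grid_guards_general P t w hw0 hw G hGfin hG
end

section
/- Let P be an arbitrary subset of the Euclidean plane ℝ² and let 0 ≤ s ≤ t. If a finite set G ⊆ ℝ² guards the Minkowski inflation P + closedBall(0, s), then there exists a finite set G' ⊆ ℝ² with |G'| ≤ |G| that guards the Minkowski inflation P + closedBall(0, t). Consequently, the minimum number of guards needed for P + closedBall(0, t) is a monotonically decreasing function of t. -/
/-!
The original guards still work. Since `closedBall 0 t = closedBall 0 s + closedBall 0 (t - s)`,
a point of `P + closedBall 0 t` has the form `q + w` with `q` seen from some guard `g` inside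
`P + closedBall 0 s` and `‖w‖ ≤ t - s`; each point `a • g + b • (q + w)` of the segment from `g`
to `q + w` is the point `a • g + b • q` of the old segment shifted by `b • w`, which again lies in
`closedBall 0 (t - s)`.
-/

open Pointwise

theorem segment_subset_add_of_starConvex {𝕜 E : Type*} [Ring 𝕜] [PartialOrder 𝕜]
    [IsOrderedRing 𝕜] [AddCommGroup E] [Module 𝕜 E] {Q K : Set E} {g q w : E}
    (hgq : segment 𝕜 g q ⊆ Q) (hK : StarConvex 𝕜 0 K) (hw : w ∈ K) :
    segment 𝕜 g (q + w) ⊆ Q + K := by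
  rintro _ ⟨a, b, ha, hb, hab, rfl⟩
  refine ⟨a • g + b • q, hgq ⟨a, b, ha, hb, hab, rfl⟩, b • w,
    hK.smul_mem hw hb (hab ▸ le_add_of_nonneg_left ha), ?_⟩
  show a • g + b • q + b • w = a • g + b • (q + w)
  rw [smul_add, add_assoc]

theorem Guards.add_starConvex {G Q K : Set (EuclideanSpace ℝ (Fin 2))} (hG : Guards G Q)
    (hK : StarConvex ℝ 0 K) : Guards G (Q + K) := by
  rintro _ ⟨q, hq, w, hw, rfl⟩
  obtain ⟨g, hg, hgq⟩ := hG q hq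
  exact ⟨g, hg, segment_subset_add_of_starConvex hgq hK hw⟩

theorem guard_number_monotone_under_inflation
    (P : Set (EuclideanSpace ℝ (Fin 2))) (s t : ℝ) (hs : 0 ≤ s) (hst : s ≤ t)
    (G : Set (EuclideanSpace ℝ (Fin 2))) (hGfin : G.Finite)
    (hG : Guards G (P + Metric.closedBall (0 : EuclideanSpace ℝ (Fin 2)) s)) :
    ∃ G' : Set (EuclideanSpace ℝ (Fin 2)), G'.Finite ∧
      Nat.card G' ≤ Nat.card G ∧
      Guards G' (P + Metric.closedBall (0 : EuclideanSpace ℝ (Fin 2)) t) := by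
  refine ⟨G, hGfin, le_rfl, ?_⟩
  have hts : 0 ≤ t - s := sub_nonneg.2 hst
  have hsplit : P + Metric.closedBall (0 : EuclideanSpace ℝ (Fin 2)) t =
      (P + Metric.closedBall 0 s) + Metric.closedBall 0 (t - s) := by
    rw [add_assoc, closedBall_add_closedBall hs hts, add_zero, add_sub_cancel]
  rw [hsplit]
  exact hG.add_starConvex ((convex_closedBall 0 _).starConvex (Metric.mem_closedBall_self hts))
end

section
/- Let ℓ ≥ 1 be a natural number, let L > 0, and let δ₁, …, δ_ℓ be positive real numbers with sum δ such that δᵢ ≤ L/e for every i (where e is Euler's number). Then Σ_{i=1}^{ℓ} δᵢ·(log(L/δᵢ))² ≤ δ·(log(L·ℓ/δ))², where log denotes the natural logarithm. -/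
/-!
On `(0, L/e]` the function `x ↦ x (log (L/x))²` has derivative `u² - 2u` with `u = log (L/x) ≥ 1`;
since `u` decreases in `x` and `u² - 2u` increases for `u ≥ 1`, the derivative is antitone and the
function is concave. Jensen's inequality with equal weights `1/ℓ` then bounds the sum by
`ℓ · f(δ/ℓ) = δ (log (Lℓ/δ))²`.
-/

open Real Set Finset

theorem ConcaveOn.sum_le_card_mul_map_average {E ι : Type*} [AddCommGroup E] [Module ℝ E]
    {s : Set E} {f : E → ℝ} (hf : ConcaveOn ℝ s f) {t : Finset ι} (ht : t.Nonempty)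
    {p : ι → E} (hp : ∀ i ∈ t, p i ∈ s) :
    ∑ i ∈ t, f (p i) ≤ #t * f ((#t : ℝ)⁻¹ • ∑ i ∈ t, p i) := by
  have hcard : (0 : ℝ) < #t := by exact_mod_cast ht.card_pos
  have hjensen := hf.le_map_sum (w := fun _ ↦ (#t : ℝ)⁻¹) (fun _ _ ↦ by positivity)
    (by simp [hcard.ne']) hp
  rwa [← smul_sum, ← smul_sum, smul_eq_mul, inv_mul_le_iff₀ hcard] at hjensen

theorem hasDerivAt_mul_log_div_sq {L x : ℝ} (hL : L ≠ 0) (hx : x ≠ 0) :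
    HasDerivAt (fun y ↦ y * log (L / y) ^ 2) (log (L / x) ^ 2 - 2 * log (L / x)) x := by
  have hlog : HasDerivAt (fun y ↦ log (L / y)) (-x⁻¹) x := by
    convert ((hasDerivAt_inv hx).const_mul L).log (by simp [hL, hx]) using 1
    · simp [div_eq_mul_inv]
    · field_simp
  refine ((hasDerivAt_id' x).mul (hlog.pow 2)).congr_deriv ?_
  simp only [Pi.pow_apply]
  field_simp
  ring

theorem pos_of_pos_of_le_div_exp {L x : ℝ} (hx : 0 < x) (hxL : x ≤ L / exp 1) : 0 < L :=
  (div_pos_iff_of_pos_right (exp_pos 1)).mp (hx.trans_le hxL)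

theorem one_le_log_div_of_le_div_exp {L x : ℝ} (hx : 0 < x) (hxL : x ≤ L / exp 1) :
    1 ≤ log (L / x) := by
  rw [le_log_iff_exp_le (div_pos (pos_of_pos_of_le_div_exp hx hxL) hx), le_div_iff₀ hx,
    mul_comm, ← le_div_iff₀ (exp_pos 1)]
  exact hxL

theorem concaveOn_mul_log_div_sq (L : ℝ) :
    ConcaveOn ℝ (Ioc 0 (L / exp 1)) (fun x ↦ x * log (L / x) ^ 2) := by
  have hderiv : ∀ x ∈ Ioc 0 (L / exp 1),
      HasDerivAt (fun y ↦ y * log (L / y) ^ 2) (log (L / x) ^ 2 - 2 * log (L / x)) x :=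
    fun x ⟨hx, hxL⟩ ↦
      hasDerivAt_mul_log_div_sq (pos_of_pos_of_le_div_exp hx hxL).ne' hx.ne'
  refine AntitoneOn.concaveOn_of_deriv (convex_Ioc _ _)
    (fun x hx ↦ (hderiv x hx).continuousAt.continuousWithinAt)
    (fun x hx ↦ (hderiv x (interior_subset hx)).differentiableAt.differentiableWithinAt) ?_
  intro x hx y hy hxy
  rw [interior_Ioc] at hx hy
  rw [(hderiv x (Ioo_subset_Ioc_self hx)).deriv, (hderiv y (Ioo_subset_Ioc_self hy)).deriv]
  have hL : 0 < L := pos_of_pos_of_le_div_exp hy.1 hy.2.le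
  have hv : 1 ≤ log (L / y) := one_le_log_div_of_le_div_exp hy.1 hy.2.le
  have hvu : log (L / y) ≤ log (L / x) :=
    log_le_log (div_pos hL hy.1) (div_le_div_of_nonneg_left hL.le hx.1 hxy)
  nlinarith

theorem sum_xlogsq_concave_max_general (ℓ : ℕ) (hℓ : 1 ≤ ℓ) (L : ℝ)
    (d : Fin ℓ → ℝ) (hd : ∀ i, 0 < d i) (hdL : ∀ i, d i ≤ L / Real.exp 1)
    (δ : ℝ) (hsum : ∑ i, d i = δ) :
    ∑ i, d i * (Real.log (L / d i)) ^ 2 ≤ δ * (Real.log (L * ℓ / δ)) ^ 2 := by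
  have hℓ₀ : (ℓ : ℝ) ≠ 0 := by positivity
  have hjensen := (concaveOn_mul_log_div_sq L).sum_le_card_mul_map_average
    (univ_nonempty_iff.mpr ⟨⟨0, hℓ⟩⟩) (p := d) (fun i _ ↦ ⟨hd i, hdL i⟩)
  rwa [card_univ, Fintype.card_fin, hsum, smul_eq_mul, inv_mul_eq_div, div_div_eq_mul_div,
    ← mul_assoc, mul_div_cancel₀ _ hℓ₀] at hjensen

theorem sum_xlogsq_concave_max (ℓ : ℕ) (hℓ : 1 ≤ ℓ) (L : ℝ) (hL : 0 < L)
    (d : Fin ℓ → ℝ) (hd : ∀ i, 0 < d i) (hdL : ∀ i, d i ≤ L / Real.exp 1)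
    (δ : ℝ) (hsum : ∑ i, d i = δ) :
    ∑ i, d i * (Real.log (L / d i)) ^ 2 ≤ δ * (Real.log (L * ℓ / δ)) ^ 2 :=
  sum_xlogsq_concave_max_general ℓ hℓ L d hd hdL δ hsum
end

section
/- Let ℓ ≥ 1 be a natural number, let L > 0 and δ > 0, and let 0 = t₀ ≤ t₁ ≤ … ≤ t_ℓ = δ be real numbers. Then (1/δ)·Σ_{i=1}^{ℓ} ∫_{t_{i−1}}^{t_i} log(L/(s − t_{i−1})) ds ≤ 1 + log(L·ℓ/δ), where log denotes the natural logarithm and each integral is over s ∈ (t_{i−1}, t_i]. -/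
/-!
On the `i`-th piece of length `dᵢ = t_{i+1} - t_i` the integral equals
`dᵢ (1 + log L) + negMulLog dᵢ`. The lengths sum to `δ`, so by concavity of `negMulLog`
(Jensen with uniform weights) the sum is largest when all `dᵢ = δ / ℓ`, which gives
`δ (1 + log L) + δ log (ℓ / δ)`.
-/

open MeasureTheory Real Finset

lemma integral_Ioc_log_div_sub {a b L : ℝ} (hab : a ≤ b) (hL : L ≠ 0) :
    ∫ s in Set.Ioc a b, log (L / (s - a)) = (b - a) * (1 + log L) + negMulLog (b - a) := by
  have hd : 0 ≤ b - a := sub_nonneg.2 hab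
  rw [← intervalIntegral.integral_of_le hab,
    intervalIntegral.integral_comp_sub_right (fun s => log (L / s)), sub_self]
  have hlog_div :
      ∫ s in (0 : ℝ)..b - a, log (L / s) = ∫ s in (0 : ℝ)..b - a, (log L - log s) := by
    refine intervalIntegral.integral_congr_ae (Filter.Eventually.of_forall fun s hs => ?_)
    rw [Set.uIoc_of_le hd] at hs
    exact log_div hL hs.1.ne'
  rw [hlog_div, intervalIntegral.integral_sub intervalIntegrable_const
      intervalIntegral.intervalIntegrable_log',
    intervalIntegral.integral_const, integral_log_from_zero, smul_eq_mul, negMulLog]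
  ring

lemma sum_negMulLog_le {ι : Type*} {s : Finset ι} {d : ι → ℝ} (hd : ∀ i ∈ s, 0 ≤ d i) :
    ∑ i ∈ s, negMulLog (d i) ≤ (∑ i ∈ s, d i) * log (#s / ∑ i ∈ s, d i) := by
  rcases s.eq_empty_or_nonempty with rfl | hs
  · simp
  have hn : (0 : ℝ) < #s := by exact_mod_cast hs.card_pos
  have hjensen := concaveOn_negMulLog.le_map_sum (t := s) (w := fun _ => (#s : ℝ)⁻¹) (p := d)
    (fun _ _ => inv_nonneg.2 hn.le) (by simp [hn.ne']) hd
  simp only [smul_eq_mul, ← mul_sum] at hjensen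
  rw [negMulLog, inv_mul_le_iff₀ hn] at hjensen
  refine hjensen.trans_eq ?_
  rw [inv_mul_eq_div, ← inv_div, log_inv]
  field_simp

theorem expected_log_bits_bound (ℓ : ℕ) (hℓ : 1 ≤ ℓ) (L δ : ℝ) (hL : 0 < L) (hδ : 0 < δ)
    (t : ℕ → ℝ) (h0 : t 0 = 0) (hend : t ℓ = δ)
    (hmono : ∀ i < ℓ, t i ≤ t (i + 1)) :
    (1 / δ) * ∑ i ∈ Finset.range ℓ,
        ∫ s in Set.Ioc (t i) (t (i + 1)), Real.log (L / (s - t i))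
      ≤ 1 + Real.log (L * ℓ / δ) := by
  have hpiece : ∀ i ∈ range ℓ, ∫ s in Set.Ioc (t i) (t (i + 1)), log (L / (s - t i)) =
      (t (i + 1) - t i) * (1 + log L) + negMulLog (t (i + 1) - t i) := fun i hi =>
    integral_Ioc_log_div_sub (hmono i (mem_range.1 hi)) hL.ne'
  have hlength : ∑ i ∈ range ℓ, (t (i + 1) - t i) = δ := by
    rw [sum_range_sub, hend, h0, sub_zero]
  have hjensen := sum_negMulLog_le (d := fun i => t (i + 1) - t i)
    fun i hi => sub_nonneg.2 (hmono i (mem_range.1 hi))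
  rw [hlength, card_range] at hjensen
  rw [sum_congr rfl hpiece, sum_add_distrib, ← sum_mul, hlength, mul_div_assoc,
    log_mul hL.ne' (by positivity)]
  calc 1 / δ * (δ * (1 + log L) + ∑ i ∈ range ℓ, negMulLog (t (i + 1) - t i))
      ≤ 1 / δ * (δ * (1 + log L) + δ * log (ℓ / δ)) := by gcongr
    _ = 1 + (log L + log (ℓ / δ)) := by field_simp; ring
end

section
/- Let n ≥ 2 be a natural number and let a > 0 and b > 0 be real numbers. Then ∫₀^a t^{n−2}·(a − t)·log(b·(a − t)) dt = (aⁿ/(n·(n−1)))·(log(a·b) − H_{n−1} + (n−1)/n), where log denotes the natural logarithm and H_{n−1} is the (n−1)-st harmonic number. -/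
/-!
Since `t ^ (n - 2) * (a - t) = a * t ^ (n - 2) - t ^ (n - 1)`, it suffices to show
`∫₀^a t ^ m * log (b * (a - t)) dt = a ^ (m + 1) / (m + 1) * (log (a * b) - H_{m + 1})`.
This is the fundamental theorem of calculus for the antiderivative `powMulLogAntideriv`:
differentiating its logarithmic part produces the geometric sum
`(a ^ (m + 1) - t ^ (m + 1)) / (a - t)`, which its polynomial part cancels, and at `t = a`
only the polynomial part survives, with value `-a ^ (m + 1) * H_{m + 1} / (m + 1)`.
-/

open MeasureTheory Set Real Finset

lemma intervalIntegrable_log_mul_sub (b c x y : ℝ) :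
    IntervalIntegrable (fun t => log (b * (c - t))) volume x y := by
  rcases eq_or_ne b 0 with rfl | hb
  · simp
  have h := (intervalIntegral.intervalIntegrable_log' (a := b * (c - x))
    (b := b * (c - y))).comp_mul_left (c := b) |>.comp_sub_left c
  simpa [hb] using h

lemma continuous_mul_log_const_mul (b : ℝ) : Continuous fun s : ℝ => s * log (b * s) := by
  rcases eq_or_ne b 0 with rfl | hb
  · simp only [zero_mul, log_zero, mul_zero]
    exact continuous_const
  have h : (fun s : ℝ => s * log (b * s)) = fun s => s * log b + s * log s := by
    funext s
    rcases eq_or_ne s 0 with rfl | hs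
    · simp
    rw [log_mul hb hs, mul_add]
  rw [h]
  exact (continuous_id.mul continuous_const).add continuous_mul_log

section PowMulLog

variable (m : ℕ) (a b : ℝ)

noncomputable def powMulLogAntideriv (t : ℝ) : ℝ :=
  ((t ^ (m + 1) - a ^ (m + 1)) * log (b * (a - t))
    - ∑ k ∈ range (m + 1), a ^ (m - k) * t ^ (k + 1) / (k + 1)) / (m + 1)

lemma pow_succ_sub_pow_succ_eq (t : ℝ) :
    t ^ (m + 1) - a ^ (m + 1) = (∑ k ∈ range (m + 1), t ^ k * a ^ (m - k)) * (t - a) := by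
  simpa using (geom_sum₂_mul t a (m + 1)).symm

lemma continuous_powMulLogAntideriv : Continuous (powMulLogAntideriv m a b) := by
  -- the factor `a - t` tames the logarithmic singularity at `t = a`
  have h : ∀ t, (t ^ (m + 1) - a ^ (m + 1)) * log (b * (a - t))
      = -(∑ k ∈ range (m + 1), t ^ k * a ^ (m - k)) * ((a - t) * log (b * (a - t))) := by
    intro t
    rw [pow_succ_sub_pow_succ_eq]
    ring
  unfold powMulLogAntideriv
  simp_rw [h]
  have := (continuous_mul_log_const_mul b).comp (continuous_sub_left a)
  fun_prop

lemma hasDerivAt_powMulLogAntideriv {t : ℝ} (hb : b ≠ 0) (ht : t ≠ a) :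
    HasDerivAt (powMulLogAntideriv m a b) (t ^ m * log (b * (a - t))) t := by
  have hat : a - t ≠ 0 := sub_ne_zero.2 ht.symm
  have hlog : HasDerivAt (fun s => log (b * (a - s))) (-(a - t)⁻¹) t := by
    have := (((hasDerivAt_id' t).const_sub a).const_mul b).log (mul_ne_zero hb hat)
    convert this using 1
    field_simp
  have hsum : HasDerivAt (fun s => ∑ k ∈ range (m + 1), a ^ (m - k) * s ^ (k + 1) / (k + 1))
      (∑ k ∈ range (m + 1), t ^ k * a ^ (m - k)) t := by
    refine HasDerivAt.fun_sum fun k _ => ?_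
    refine (((hasDerivAt_pow (k + 1) t).const_mul (a ^ (m - k))).div_const
      ((k : ℝ) + 1)).congr_deriv ?_
    push_cast
    field_simp
  refine ((((hasDerivAt_pow (m + 1) t).sub_const (a ^ (m + 1))).mul hlog).sub hsum).div_const
    ((m : ℝ) + 1) |>.congr_deriv ?_
  rw [pow_succ_sub_pow_succ_eq m a t]
  field_simp
  push_cast
  ring

lemma powMulLogAntideriv_zero :
    powMulLogAntideriv m a b 0 = -(a ^ (m + 1) / (m + 1)) * log (a * b) := by
  simp [powMulLogAntideriv, mul_comm b a]
  ring

lemma powMulLogAntideriv_self :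
    powMulLogAntideriv m a b a = -(a ^ (m + 1) / (m + 1)) * harmonic (m + 1) := by
  have h : ∀ k ∈ range (m + 1),
      a ^ (m - k) * a ^ (k + 1) / (k + 1) = a ^ (m + 1) / (k + 1) := by
    intro k hk
    rw [← pow_add, show m - k + (k + 1) = m + 1 by have := mem_range_succ_iff.1 hk; omega]
  simp only [powMulLogAntideriv, sub_self, zero_mul, zero_sub, sum_congr rfl h, harmonic]
  push_cast
  rw [mul_sum, neg_div, sum_div, ← sum_neg_distrib]
  refine sum_congr rfl fun k _ => ?_
  ring

theorem integral_pow_mul_log_mul_sub (ha : 0 ≤ a) (hb : b ≠ 0) :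
    ∫ t in (0 : ℝ)..a, t ^ m * log (b * (a - t))
      = a ^ (m + 1) / (m + 1) * (log (a * b) - harmonic (m + 1)) := by
  rw [intervalIntegral.integral_eq_sub_of_hasDerivAt_of_le ha
    (continuous_powMulLogAntideriv m a b).continuousOn
    (fun t ht => hasDerivAt_powMulLogAntideriv m a b hb ht.2.ne)
    ((intervalIntegrable_log_mul_sub b a 0 a).continuousOn_mul (by fun_prop)),
    powMulLogAntideriv_zero, powMulLogAntideriv_self]
  ring

end PowMulLog

theorem integral_pow_mul_lin_mul_log (n : ℕ) (hn : 2 ≤ n) (a b : ℝ) (ha : 0 < a) (hb : 0 < b) :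
    ∫ t in Set.Ioc (0 : ℝ) a, t ^ (n - 2) * (a - t) * Real.log (b * (a - t))
      = (a ^ n / (n * (n - 1)))
          * (Real.log (a * b) - (∑ k ∈ Finset.range (n - 1), (1 : ℝ) / (k + 1))
              + (n - 1) / n) := by
  obtain ⟨m, rfl⟩ : ∃ m, n = m + 2 := ⟨n - 2, by omega⟩
  have hsplit : ∀ t : ℝ, t ^ m * (a - t) * log (b * (a - t))
      = a * (t ^ m * log (b * (a - t))) - t ^ (m + 1) * log (b * (a - t)) := fun t => by ring
  have hint : ∀ k : ℕ, IntervalIntegrable (fun t => t ^ k * log (b * (a - t))) volume 0 a :=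
    fun k => (intervalIntegrable_log_mul_sub b a 0 a).continuousOn_mul (by fun_prop)
  have hH : ∑ k ∈ range (m + 1), (1 : ℝ) / (k + 1) = harmonic (m + 1) := by
    simp [harmonic]
  rw [Nat.add_sub_cancel, show m + 2 - 1 = m + 1 by omega, hH,
    ← intervalIntegral.integral_of_le ha.le, funext hsplit,
    intervalIntegral.integral_sub ((hint m).const_mul a) (hint (m + 1)),
    intervalIntegral.integral_const_mul, integral_pow_mul_log_mul_sub m a b ha.le hb.ne',
    integral_pow_mul_log_mul_sub (m + 1) a b ha.le hb.ne', harmonic_succ (m + 1)]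
  push_cast
  rw [show (m : ℝ) + 2 - 1 = m + 1 by ring]
  field_simp
  ring
end

section
/- Let n ≥ 2 be a natural number, let a > 0, and let f : ℝ → [0, ∞] be a measurable function. Then, with respect to Lebesgue measure on ℝⁿ, ∫_{[0,a]ⁿ} f(max_i v_i − min_i v_i) dv = n·(n−1)·∫₀^a t^{n−2}·(a − t)·f(t) dt. -/
/-!
Both sides integrate `f` against a finite measure on `ℝ`, the left one against the image of
Lebesgue measure on the cube under `v ↦ max v - min v`, so it suffices to compare distribution
functions. Off the null set of ties, the event `max v - min v ≤ s` splits according to which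
coordinate `x` is the minimum; the other `n - 1` coordinates then range over
`(x, min (x + s) a]`, so by Fubini each piece has volume `∫₀^a (min (x + s) a - x)^(n-1) dx`.
With `m = min s a`, the `n` pieces add up to `n a m^(n-1) - (n-1) m^n`, which is also
`n (n-1) ∫₀^m t^(n-2) (a - t) dt`.
-/

open MeasureTheory Set
open scoped ENNReal

theorem volume_setOf_apply_eq_apply {ι : Type*} [Fintype ι] {i j : ι} (hij : i ≠ j) :
    volume {v : ι → ℝ | v i = v j} = 0 := by
  classical
  let L : (ι → ℝ) →ₗ[ℝ] ℝ :=
    LinearMap.proj (R := ℝ) (φ := fun _ : ι => ℝ) i - LinearMap.proj j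
  have hker : {v : ι → ℝ | v i = v j} = LinearMap.ker L := by
    ext v; simp [L, sub_eq_zero]
  rw [hker]
  refine Measure.addHaar_submodule _ _ fun htop => ?_
  have : Pi.single i 1 ∈ LinearMap.ker L := htop ▸ Submodule.mem_top
  simp [L, hij] at this

theorem measurableSet_setOf_snd_mem_Ioc {f : ℝ → ℝ} (hf : Measurable f) :
    MeasurableSet {p : ℝ × ℝ | p.2 ∈ Ioc p.1 (f p.1)} :=
  (measurableSet_lt measurable_fst measurable_snd).inter
    (measurableSet_le measurable_snd (hf.comp measurable_fst))

theorem measurableSet_setOf_apply_mem_forall_ne {ι : Type*} [Countable ι] (i : ι) {S : Set ℝ}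
    (hS : MeasurableSet S) {T : ℝ → Set ℝ}
    (hT : MeasurableSet {p : ℝ × ℝ | p.2 ∈ T p.1}) :
    MeasurableSet {v : ι → ℝ | v i ∈ S ∧ ∀ j ≠ i, v j ∈ T (v i)} := by
  have hpair : ∀ j, Measurable fun v : ι → ℝ => (v i, v j) := fun j => by fun_prop
  exact measurableSet_setOfPred.2 <| (measurableSet_setOfPred.1 (measurable_pi_apply i hS)).and <|
    .forall fun j => .forall fun _ => measurableSet_setOfPred.1 (hT.preimage (hpair j))

theorem volume_setOf_apply_mem_forall_ne {N : ℕ} (i : Fin (N + 1)) {S : Set ℝ}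
    (hS : MeasurableSet S) {T : ℝ → Set ℝ}
    (hT : MeasurableSet {p : ℝ × ℝ | p.2 ∈ T p.1}) :
    volume {v : Fin (N + 1) → ℝ | v i ∈ S ∧ ∀ j ≠ i, v j ∈ T (v i)} =
      ∫⁻ x in S, volume (T x) ^ N := by
  let U : Set (ℝ × (Fin N → ℝ)) := {p | p.1 ∈ S ∧ ∀ k, p.2 k ∈ T p.1}
  have hU : MeasurableSet U := measurableSet_setOfPred.2 <|
    (measurableSet_setOfPred.1 (measurable_fst hS)).and <|
      .forall fun k => measurableSet_setOfPred.1 <|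
        hT.preimage (f := fun p : ℝ × (Fin N → ℝ) => (p.1, p.2 k)) (by fun_prop)
  have hpre : {v : Fin (N + 1) → ℝ | v i ∈ S ∧ ∀ j ≠ i, v j ∈ T (v i)} =
      MeasurableEquiv.piFinSuccAbove (fun _ => ℝ) i ⁻¹' U := by
    ext v
    change _ ↔ v i ∈ S ∧ ∀ k, v (i.succAbove k) ∈ T (v i)
    simp [Fin.forall_iff_succAbove i]
  have hfiber : ∀ x, volume (Prod.mk x ⁻¹' U) = S.indicator (fun x => volume (T x) ^ N) x := by
    intro x
    by_cases hx : x ∈ S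
    · have : Prod.mk x ⁻¹' U = univ.pi fun _ => T x := by ext y; simp [U, hx]
      simp [this, volume_pi_pi, hx]
    · have : Prod.mk x ⁻¹' U = ∅ := by ext y; simp [U, hx]
      simp [this, hx]
  rw [hpre, (volume_preserving_piFinSuccAbove (fun _ => ℝ) i).measure_preimage
    hU.nullMeasurableSet, Measure.volume_eq_prod, Measure.prod_apply hU, lintegral_congr hfiber,
    lintegral_indicator hS]

def minSlab {ι : Type*} (a s : ℝ) (i : ι) : Set (ι → ℝ) :=
  {v | v i ∈ Icc 0 a ∧ ∀ j ≠ i, v j ∈ Ioc (v i) (min (v i + s) a)}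

section minSlab

variable {ι : Type*} {a s : ℝ}

theorem measurableSet_minSlab [Countable ι] (i : ι) : MeasurableSet (minSlab a s i) :=
  measurableSet_setOf_apply_mem_forall_ne i measurableSet_Icc
    (T := fun x => Ioc x (min (x + s) a)) <|
      measurableSet_setOf_snd_mem_Ioc (f := fun x => min (x + s) a) (by fun_prop)

theorem pairwise_disjoint_minSlab : Pairwise (Function.onFun Disjoint (minSlab (ι := ι) a s)) :=
  fun i j hij => disjoint_left.2 fun _ hvi hvj =>
    ((hvi.2 j hij.symm).1.trans (hvj.2 i hij).1).false

theorem iUnion_minSlab_subset [Finite ι] [Nonempty ι] (hs : 0 ≤ s) :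
    ⋃ i : ι, minSlab a s i ⊆
      {v : ι → ℝ | ∀ i, v i ∈ Icc 0 a} ∩ {v | (⨆ i, v i) - ⨅ i, v i ≤ s} := by
  simp only [iUnion_subset_iff]
  intro i v ⟨hvi, hv⟩
  have hlow : ∀ j, v i ≤ v j := fun j => by
    rcases eq_or_ne j i with rfl | hj
    exacts [le_rfl, (hv j hj).1.le]
  have hup : ∀ j, v j ≤ min (v i + s) a := fun j => by
    rcases eq_or_ne j i with rfl | hj
    exacts [le_min (by linarith) hvi.2, (hv j hj).2]
  refine ⟨fun j => ⟨hvi.1.trans (hlow j), (hup j).trans (min_le_right _ _)⟩, ?_⟩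
  have := ciSup_le fun j => (hup j).trans (min_le_left _ _)
  have := le_ciInf hlow
  simp only [mem_ofPred_eq]
  linarith

theorem subset_iUnion_minSlab_union [Finite ι] [Nonempty ι] :
    {v : ι → ℝ | ∀ i, v i ∈ Icc 0 a} ∩ {v | (⨆ i, v i) - ⨅ i, v i ≤ s} ⊆
      (⋃ i : ι, minSlab a s i) ∪ ⋃ j, ⋃ k, ⋃ (_ : j ≠ k), {v | v j = v k} := by
  intro v ⟨hcube, hrange⟩
  by_cases hties : ∃ j k, j ≠ k ∧ v j = v k
  · obtain ⟨j, k, hjk, hv⟩ := hties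
    exact Or.inr (mem_iUnion₂.2 ⟨j, k, mem_iUnion.2 ⟨hjk, hv⟩⟩)
  push Not at hties
  obtain ⟨i, hi⟩ := Finite.exists_min v
  refine Or.inl <| mem_iUnion.2
    ⟨i, hcube i, fun j hj => ⟨(hi j).lt_of_ne (hties i j hj.symm), ?_⟩⟩
  have := le_ciSup (Finite.bddAbove_range v) j
  have := ciInf_le (Finite.bddBelow_range v) i
  simp only [mem_ofPred_eq] at hrange
  exact le_min (by linarith) (hcube j).2

theorem volume_cube_inter_iSup_sub_iInf_le_eq_sum [Fintype ι] [Nonempty ι] (hs : 0 ≤ s) :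
    volume ({v : ι → ℝ | ∀ i, v i ∈ Icc 0 a} ∩ {v | (⨆ i, v i) - ⨅ i, v i ≤ s}) =
      ∑ i : ι, volume (minSlab a s i) := by
  have hties : volume (⋃ j, ⋃ k, ⋃ (_ : j ≠ k), {v : ι → ℝ | v j = v k}) = 0 :=
    measure_iUnion_null fun j => measure_iUnion_null fun k => measure_iUnion_null
      volume_setOf_apply_eq_apply
  have hslabs : volume (⋃ i : ι, minSlab a s i) = ∑ i : ι, volume (minSlab a s i) := by
    rw [measure_iUnion pairwise_disjoint_minSlab measurableSet_minSlab, tsum_fintype]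
  refine le_antisymm ?_ (hslabs ▸ measure_mono (iUnion_minSlab_subset hs))
  calc _ ≤ volume ((⋃ i : ι, minSlab a s i) ∪
          ⋃ j, ⋃ k, ⋃ (_ : j ≠ k), {v : ι → ℝ | v j = v k}) :=
        measure_mono subset_iUnion_minSlab_union
    _ ≤ volume (⋃ i : ι, minSlab a s i) + 0 := hties ▸ measure_union_le _ _
    _ = _ := by rw [add_zero, hslabs]

end minSlab

theorem lintegral_Ioc_ofReal_eq_intervalIntegral {g : ℝ → ℝ} {a b : ℝ} (hab : a ≤ b)
    (hg : Continuous g) (hg0 : ∀ x ∈ Ioc a b, 0 ≤ g x) :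
    ∫⁻ x in Ioc a b, ENNReal.ofReal (g x) = ENNReal.ofReal (∫ x in a..b, g x) := by
  rw [intervalIntegral.integral_of_le hab,
    ofReal_integral_eq_lintegral_ofReal hg.integrableOn_Ioc
      ((ae_restrict_iff' measurableSet_Ioc).2 (.of_forall hg0))]

theorem integral_min_add_sub_pow (N : ℕ) {a s : ℝ} (hs : 0 ≤ s) :
    ∫ x in 0..a, (min (x + s) a - x) ^ N =
      (a - min s a) * min s a ^ N + min s a ^ (N + 1) / (N + 1) := by
  set m := min s a
  have hcont : Continuous fun x : ℝ => (min (x + s) a - x) ^ N := by fun_prop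
  rw [← intervalIntegral.integral_add_adjacent_intervals (b := a - m)
    (hcont.intervalIntegrable _ _) (hcont.intervalIntegrable _ _)]
  have hflat : ∫ x in 0..a - m, (min (x + s) a - x) ^ N = (a - m) * m ^ N := by
    rw [intervalIntegral.integral_congr (g := fun _ => m ^ N), intervalIntegral.integral_const,
      sub_zero, smul_eq_mul]
    intro x hx
    rw [mem_uIcc] at hx
    dsimp only
    congr 1
    grind
  have hramp : ∫ x in a - m..a, (min (x + s) a - x) ^ N = m ^ (N + 1) / (N + 1) := by
    rw [intervalIntegral.integral_congr (g := fun x => (a - x) ^ N),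
      intervalIntegral.integral_comp_sub_left (fun y => y ^ N), sub_self, sub_sub_cancel,
      integral_pow]
    · simp
    intro x hx
    rw [mem_uIcc] at hx
    dsimp only
    congr 1
    grind
  rw [hflat, hramp]

theorem integral_pow_mul_sub (K : ℕ) (a m : ℝ) :
    ∫ t in 0..m, t ^ K * (a - t) = a * m ^ (K + 1) / (K + 1) - m ^ (K + 2) / (K + 2) := by
  have : (fun t : ℝ => t ^ K * (a - t)) = fun t => a * t ^ K - t ^ (K + 1) := by
    funext t; ring
  rw [this, intervalIntegral.integral_sub ((intervalIntegral.intervalIntegrable_pow K).const_mul a)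
    (intervalIntegral.intervalIntegrable_pow _), intervalIntegral.integral_const_mul,
    integral_pow, integral_pow]
  push_cast
  ring

theorem volume_minSlab {N : ℕ} (i : Fin (N + 1)) {a s : ℝ} (ha : 0 ≤ a) (hs : 0 ≤ s) :
    volume (minSlab a s i) =
      ENNReal.ofReal ((a - min s a) * min s a ^ N + min s a ^ (N + 1) / (N + 1)) := by
  rw [minSlab, volume_setOf_apply_mem_forall_ne i measurableSet_Icc
      (T := fun x => Ioc x (min (x + s) a)) <|
        measurableSet_setOf_snd_mem_Ioc (f := fun x => min (x + s) a) (by fun_prop),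
    ← Measure.restrict_congr_set Ioc_ae_eq_Icc, ← integral_min_add_sub_pow N hs,
    ← lintegral_Ioc_ofReal_eq_intervalIntegral ha (by fun_prop)]
  · refine setLIntegral_congr_fun measurableSet_Ioc fun x hx => ?_
    have : x ≤ min (x + s) a := le_min (by linarith) hx.2
    rw [Real.volume_Ioc, ENNReal.ofReal_pow (by linarith)]
  · intro x hx
    have : x ≤ min (x + s) a := le_min (by linarith) hx.2
    positivity

theorem volume_cube_inter_iSup_sub_iInf_le {K : ℕ} {a s : ℝ} (ha : 0 ≤ a) (hs : 0 ≤ s) :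
    volume ({v : Fin (K + 2) → ℝ | ∀ i, v i ∈ Icc 0 a} ∩
        {v | (⨆ i, v i) - ⨅ i, v i ≤ s}) =
      ((K + 2) * (K + 1) : ℕ) * ENNReal.ofReal (∫ t in 0..min s a, t ^ K * (a - t)) := by
  simp only [volume_cube_inter_iSup_sub_iInf_le_eq_sum hs, volume_minSlab _ ha hs,
    Finset.sum_const, Finset.card_univ, Fintype.card_fin, nsmul_eq_mul, integral_pow_mul_sub]
  rw [← ENNReal.ofReal_natCast, ← ENNReal.ofReal_natCast ((K + 2) * (K + 1)),
    ← ENNReal.ofReal_mul (by positivity), ← ENNReal.ofReal_mul (by positivity)]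
  congr 1
  push_cast
  field_simp
  ring

theorem measurable_iSup_sub_iInf {ι : Type*} [Countable ι] :
    Measurable fun v : ι → ℝ => (⨆ i, v i) - ⨅ i, v i :=
  (Measurable.iSup fun i => measurable_pi_apply i).sub
    (Measurable.iInf fun i => measurable_pi_apply i)

theorem map_iSup_sub_iInf_volume_cube {n : ℕ} (hn : 2 ≤ n) {a : ℝ} (ha : 0 ≤ a) :
    (volume.restrict {v : Fin n → ℝ | ∀ i, v i ∈ Icc 0 a}).map
        (fun v => (⨆ i, v i) - ⨅ i, v i) =
      ((n * (n - 1) : ℕ) : ℝ≥0∞) •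
        (volume.restrict (Ioc 0 a)).withDensity
          fun t => ENNReal.ofReal (t ^ (n - 2) * (a - t)) := by
  obtain ⟨K, rfl⟩ : ∃ K, n = K + 2 := ⟨n - 2, by omega⟩
  rw [Nat.add_sub_cancel, show K + 2 - 1 = K + 1 by omega]
  have hcube : {v : Fin (K + 2) → ℝ | ∀ i, v i ∈ Icc 0 a} = univ.pi fun _ => Icc 0 a := by
    ext v; simp [Pi.le_def, forall_and]
  have : IsFiniteMeasure (volume.restrict {v : Fin (K + 2) → ℝ | ∀ i, v i ∈ Icc 0 a}) :=
    isFiniteMeasure_restrict.2 <|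
      hcube ▸ (isCompact_univ_pi fun _ => isCompact_Icc).measure_ne_top
  refine Measure.ext_of_Iic _ _ fun s => ?_
  have hIoc : Iic s ∩ Ioc 0 a = Ioc 0 (min s a) := by
    ext t; simp only [mem_inter_iff, mem_Iic, mem_Ioc, le_min_iff]; tauto
  rw [Measure.map_apply measurable_iSup_sub_iInf measurableSet_Iic,
    Measure.restrict_apply (measurable_iSup_sub_iInf measurableSet_Iic), inter_comm,
    Measure.smul_apply, withDensity_apply _ measurableSet_Iic,
    Measure.restrict_restrict measurableSet_Iic, hIoc, smul_eq_mul]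
  simp only [preimage, mem_Iic]
  rcases lt_or_ge s 0 with hs | hs
  · have hempty : {v : Fin (K + 2) → ℝ | ∀ i, v i ∈ Icc 0 a} ∩
        {v | (⨆ i, v i) - ⨅ i, v i ≤ s} = ∅ :=
      eq_empty_of_forall_notMem fun v hv => (hv.2.trans_lt hs).not_ge <|
        sub_nonneg.2 (ciInf_le_ciSup (Finite.bddBelow_range v) (Finite.bddAbove_range v))
    rw [hempty, Ioc_eq_empty ((min_le_left s a).trans hs.le).not_gt]
    simp
  · rw [volume_cube_inter_iSup_sub_iInf_le ha hs,
      lintegral_Ioc_ofReal_eq_intervalIntegral (le_min hs ha) (by fun_prop)]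
    intro t ht
    have := ht.2.trans (min_le_right s a)
    have := ht.1.le
    positivity

theorem lintegral_range_cube (n : ℕ) (hn : 2 ≤ n) (a : ℝ) (ha : 0 < a)
    (f : ℝ → ℝ≥0∞) (hf : Measurable f) :
    ∫⁻ v in {v : Fin n → ℝ | ∀ i, v i ∈ Set.Icc 0 a},
        f ((⨆ i, v i) - ⨅ i, v i)
      = ((n * (n - 1) : ℕ) : ℝ≥0∞)
          * ∫⁻ t in Set.Ioc (0 : ℝ) a, ENNReal.ofReal (t ^ (n - 2) * (a - t)) * f t := by
  rw [← lintegral_map hf measurable_iSup_sub_iInf, map_iSup_sub_iInf_volume_cube hn ha.le,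
    lintegral_smul_measure, lintegral_withDensity_eq_lintegral_mul _ (by fun_prop) hf]
  rfl
end

section
/- Let n ≥ 1 be a natural number, let δ > 0, and let f : ℝ → [0, ∞] be a measurable function. Then, with respect to Lebesgue measure on (ℝ²)ⁿ, ∫_{D(δ)ⁿ} f(max_i ‖x_i‖) dx = 2·n·πⁿ·∫₀^δ t^{2n−1}·f(t) dt, where D(δ) is the closed disk of radius δ centered at the origin of the Euclidean plane ℝ² and x = (x₁, …, x_n) with each x_i ∈ D(δ). -/
/-!
The constraints `‖x i‖ ≤ δ` say that `x` lies in the closed `δ`-ball of the sup norm on `(ℝ²)ⁿ`,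
and `⨆ i, ‖x i‖` is that norm. For an additive Haar measure `μ` on a `d`-dimensional normed
space, `μ (closedBall 0 r) = r ^ d * μ (closedBall 0 1)`, so the norm pushes `μ` restricted to
`closedBall 0 δ` forward to the measure on `(0, δ]` with density
`d * t ^ (d - 1) * μ (closedBall 0 1)` (the two agree on every `Iic b`). Here `d = 2n` and the
unit ball is a product of `n` unit disks.
-/

open MeasureTheory Set Metric Module
open scoped ENNReal

theorem Pi.norm_eq_iSup_norm {ι : Type*} [Fintype ι] {E : ι → Type*}
    [∀ i, SeminormedAddGroup (E i)] (x : ∀ i, E i) : ‖x‖ = ⨆ i, ‖x i‖ := by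
  cases isEmpty_or_nonempty ι
  · simp [Subsingleton.elim x 0]
  · exact le_antisymm ((pi_norm_le_iff_of_nonempty x).2 fun i ↦
      le_ciSup (f := fun i ↦ ‖x i‖) (Finite.bddAbove (finite_range _)) i)
      (ciSup_le (norm_le_pi_norm x))

theorem lintegral_Ioc_ofReal_mul_pow_pred {d : ℕ} (hd : d ≠ 0) {r : ℝ} (hr : 0 ≤ r) :
    ∫⁻ t in Ioc 0 r, ENNReal.ofReal (d * t ^ (d - 1)) = ENNReal.ofReal (r ^ d) := by
  rw [← ofReal_integral_eq_lintegral_ofReal, ← intervalIntegral.integral_of_le hr,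
    intervalIntegral.integral_const_mul, integral_pow]
  · obtain ⟨k, rfl⟩ := Nat.exists_eq_succ_of_ne_zero hd
    congr 1
    push_cast
    field_simp
    simp
  · exact (continuous_const.mul (continuous_pow _)).integrableOn_Ioc
  · filter_upwards [ae_restrict_mem measurableSet_Ioc] with t ht
    exact mul_nonneg d.cast_nonneg (pow_nonneg ht.1.le _)

section HaarMeasure

variable {F : Type*} [NormedAddCommGroup F] [NormedSpace ℝ F] [FiniteDimensional ℝ F]
  [Nontrivial F] [MeasurableSpace F] [BorelSpace F] (μ : Measure F) [μ.IsAddHaarMeasure]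

theorem map_norm_restrict_closedBall (δ : ℝ) :
    (μ.restrict (closedBall 0 δ)).map (‖·‖) = (volume.restrict (Ioc 0 δ)).withDensity
      fun t ↦ μ (closedBall 0 1) * ENNReal.ofReal (finrank ℝ F * t ^ (finrank ℝ F - 1)) := by
  have : IsFiniteMeasure (μ.restrict (closedBall 0 δ)) :=
    isFiniteMeasure_restrict.2 measure_closedBall_lt_top.ne
  refine Measure.ext_of_Iic _ _ fun b ↦ ?_
  have hball : closedBall (0 : F) δ ∩ (‖·‖) ⁻¹' Iic b = closedBall 0 (min b δ) := by
    ext x; simp [and_comm]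
  have hIoc : Ioc 0 δ ∩ Iic b = Ioc (0 : ℝ) (min b δ) := by
    ext t; simp [and_comm, and_assoc]
  rw [Measure.map_apply continuous_norm.measurable measurableSet_Iic,
    Measure.restrict_apply (continuous_norm.measurable measurableSet_Iic), inter_comm, hball,
    withDensity_apply _ measurableSet_Iic, Measure.restrict_restrict measurableSet_Iic,
    inter_comm, hIoc, lintegral_const_mul' _ _ measure_closedBall_lt_top.ne]
  rcases lt_or_ge (min b δ) 0 with hneg | hnonneg
  · simp [closedBall_eq_empty.2 hneg, Ioc_eq_empty hneg.not_gt]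
  · rw [μ.addHaar_closedBall' 0 hnonneg,
      lintegral_Ioc_ofReal_mul_pow_pred finrank_pos.ne' hnonneg, mul_comm]

theorem lintegral_closedBall_comp_norm {f : ℝ → ℝ≥0∞} (hf : Measurable f) (δ : ℝ) :
    ∫⁻ x in closedBall 0 δ, f ‖x‖ ∂μ = finrank ℝ F * μ (closedBall 0 1) *
      ∫⁻ t in Ioc 0 δ, ENNReal.ofReal (t ^ (finrank ℝ F - 1)) * f t := by
  rw [← lintegral_map hf continuous_norm.measurable, map_norm_restrict_closedBall,
    lintegral_withDensity_eq_lintegral_mul _ (by fun_prop) hf,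
    ← lintegral_const_mul _ (by fun_prop)]
  refine lintegral_congr fun t ↦ ?_
  simp only [Pi.mul_apply, ENNReal.ofReal_mul (Nat.cast_nonneg _), ENNReal.ofReal_natCast]
  ring

end HaarMeasure

theorem volume_closedBall_pi {ι : Type*} [Fintype ι] [Nonempty ι] {E : Type*}
    [SeminormedAddCommGroup E] [MeasureSpace E] [SigmaFinite (volume : Measure E)]
    (x : ι → E) (r : ℝ) :
    volume (closedBall x r) = ∏ i, volume (closedBall (x i) r) := by
  rw [closedBall_pi', volume_pi_pi]

theorem lintegral_max_norm_disks_general (n : ℕ) (hn : 1 ≤ n) (δ : ℝ)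
    (f : ℝ → ℝ≥0∞) (hf : Measurable f) :
    ∫⁻ x in {x : Fin n → EuclideanSpace ℝ (Fin 2) |
        ∀ i, x i ∈ Metric.closedBall (0 : EuclideanSpace ℝ (Fin 2)) δ},
        f (⨆ i, ‖x i‖)
      = ENNReal.ofReal (2 * n * Real.pi ^ n)
          * ∫⁻ t in Set.Ioc (0 : ℝ) δ, ENNReal.ofReal (t ^ (2 * n - 1)) * f t := by
  have : Nonempty (Fin n) := ⟨⟨0, hn⟩⟩
  have hdisks : {x : Fin n → EuclideanSpace ℝ (Fin 2) | ∀ i, x i ∈ closedBall 0 δ} =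
      closedBall 0 δ := by
    ext x; simp [closedBall_pi']
  have hdim : finrank ℝ (Fin n → EuclideanSpace ℝ (Fin 2)) = 2 * n := by
    simp [finrank_pi_fintype, mul_comm]
  simp_rw [hdisks, ← Pi.norm_eq_iSup_norm]
  rw [lintegral_closedBall_comp_norm _ hf, hdim, volume_closedBall_pi]
  simp [ENNReal.ofReal_mul, ENNReal.ofReal_pow Real.pi_pos.le]

theorem lintegral_max_norm_disks (n : ℕ) (hn : 1 ≤ n) (δ : ℝ) (hδ : 0 < δ)
    (f : ℝ → ℝ≥0∞) (hf : Measurable f) :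
    ∫⁻ x in {x : Fin n → EuclideanSpace ℝ (Fin 2) |
        ∀ i, x i ∈ Metric.closedBall (0 : EuclideanSpace ℝ (Fin 2)) δ},
        f (⨆ i, ‖x i‖)
      = ENNReal.ofReal (2 * n * Real.pi ^ n)
          * ∫⁻ t in Set.Ioc (0 : ℝ) δ, ENNReal.ofReal (t ^ (2 * n - 1)) * f t :=
  lintegral_max_norm_disks_general n hn δ f hf
end
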